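/- arXiv:2004.01690 — 5 statements merged into one kernel-verified Lean document; each statement's English description precedes it below -/
import Mathlib

section
/- Let (Ω, μ) be a probability space, let A_c : Ω → M_n(ℝ) be measurable, and suppose there exist c ≥ 0 and 0 ≤ λ < 1 such that for μ-almost every ω and every natural number t, ‖A_c(ω)ᵗ‖ ≤ c·λᵗ (operator norm). Let M ∈ M_n(ℝ) be symmetric positive semidefinite. Then the map ω ↦ P(ω) := Σ_{t=0}^{∞} (A_c(ω)ᵀ)ᵗ M (A_c(ω))ᵗ is Bochner integrable, and for every x₀ ∈ ℝⁿ the expected infinite-horizon cost satisfies ∫ Σ_{t=0}^{∞} (A_c(ω)ᵗ x₀)ᵀ M (A_c(ω)ᵗ x₀) dμ(ω) = x₀ᵀ (∫ P(ω) dμ(ω)) x₀; in particular the expected cost-to-go is a quadratic function of x₀. -/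
/-!
Almost surely `‖(Aᵀ)ᵗ M Aᵗ‖ ≤ ‖M‖ ‖Aᵗ‖² ≤ ‖M‖ c² (λ²)ᵗ`, a summable majorant that does not depend
on `ω`. So the series `P(ω)` converges almost surely and is bounded by a constant, hence integrable
on a probability space. The cost at `x₀` is the continuous linear functional `P ↦ x₀ᵀ P x₀`
applied to the terms of that series, and such a functional commutes with both the sum and the
Bochner integral.
-/

open Matrix MeasureTheory
open scoped Matrix.Norms.L2Operator

namespace MeasureTheory

theorem integrable_tsum_of_norm_le {α E ι : Type*} [MeasurableSpace α] {μ : Measure α}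
    [IsFiniteMeasure μ] [NormedAddCommGroup E] [CompleteSpace E] [Countable ι] {F : ι → α → E}
    (hF : ∀ i, AEStronglyMeasurable (F i) μ) {g : ι → ℝ} (hg : Summable g)
    (hFg : ∀ᵐ a ∂μ, ∀ i, ‖F i a‖ ≤ g i) : Integrable (fun a => ∑' i, F i a) μ := by
  refine (integrable_const (∑' i, g i)).mono' (AEStronglyMeasurable.tsum hF) ?_
  filter_upwards [hFg] with a ha using tsum_of_norm_bounded hg.hasSum ha

end MeasureTheory

namespace Matrix

theorem dotProduct_mulVec_transpose_mul_mul {m n R : Type*} [Fintype m] [Fintype n]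
    [CommSemiring R] (B : Matrix m n R) (M : Matrix m m R) (x : n → R) :
    (B *ᵥ x) ⬝ᵥ (M *ᵥ (B *ᵥ x)) = x ⬝ᵥ ((Bᵀ * M * B) *ᵥ x) := by
  rw [← mulVec_mulVec, ← mulVec_mulVec, dotProduct_mulVec x, vecMul_transpose]

variable {m n : Type*} [Fintype m] [Fintype n] [DecidableEq m] [DecidableEq n]

theorem stronglyMeasurable_of_measurable_entries {Ω : Type*} [MeasurableSpace Ω]
    {A : Ω → Matrix m n ℝ} (hA : ∀ i j, Measurable fun ω => A ω i j) : StronglyMeasurable A := by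
  rw [show A = fun ω => ∑ i, ∑ j, single i j (A ω i j) from funext fun ω => matrix_eq_sum_single _]
  refine Finset.stronglyMeasurable_fun_sum _ fun i _ =>
    Finset.stronglyMeasurable_fun_sum _ fun j _ => ?_
  have h_single : Continuous (single i j : ℝ → Matrix m n ℝ) := by
    refine continuous_pi fun a => continuous_pi fun b => ?_
    simp only [single_apply]
    split_ifs <;> fun_prop
  exact h_single.comp_stronglyMeasurable (hA i j).stronglyMeasurable

theorem l2_opNorm_transpose (A : Matrix m n ℝ) : ‖Aᵀ‖ = ‖A‖ :=
  l2_opNorm_conjTranspose A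

theorem l2_opNorm_transpose_mul_mul_le (B : Matrix m n ℝ) (M : Matrix m m ℝ) :
    ‖Bᵀ * M * B‖ ≤ ‖M‖ * ‖B‖ ^ 2 :=
  calc ‖Bᵀ * M * B‖ ≤ ‖Bᵀ‖ * ‖M‖ * ‖B‖ :=
        (l2_opNorm_mul _ _).trans (by gcongr; exact l2_opNorm_mul _ _)
    _ = ‖M‖ * ‖B‖ ^ 2 := by rw [l2_opNorm_transpose]; ring

noncomputable def quadFormAtCLM (x : n → ℝ) : Matrix n n ℝ →L[ℝ] ℝ :=
  LinearMap.toContinuousLinearMap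
    (LinearMap.applyₗ x ∘ₗ LinearMap.applyₗ x ∘ₗ (toLinearMap₂' ℝ).toLinearMap)

@[simp]
theorem quadFormAtCLM_apply (x : n → ℝ) (P : Matrix n n ℝ) :
    quadFormAtCLM x P = x ⬝ᵥ (P *ᵥ x) :=
  toLinearMap₂'_apply' P x x

end Matrix

theorem stmt8_general {Ω : Type*} [MeasurableSpace Ω] (μ : Measure Ω) [IsProbabilityMeasure μ]
    (n : ℕ) (Ac : Ω → Matrix (Fin n) (Fin n) ℝ)
    (hmeas : ∀ a b : Fin n, Measurable fun ω => Ac ω a b)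
    (c lam : ℝ) (hlam0 : 0 ≤ lam) (hlam1 : lam < 1)
    (hAc : ∀ᵐ ω ∂μ, ∀ t : ℕ, ‖Ac ω ^ t‖ ≤ c * lam ^ t)
    (M : Matrix (Fin n) (Fin n) ℝ) :
    Integrable (fun ω => ∑' t : ℕ, (Ac ω)ᵀ ^ t * M * Ac ω ^ t) μ ∧
      ∀ x₀ : Fin n → ℝ,
        ∫ ω, ∑' t : ℕ, (Ac ω ^ t *ᵥ x₀) ⬝ᵥ (M *ᵥ (Ac ω ^ t *ᵥ x₀)) ∂μ =
          x₀ ⬝ᵥ ((∫ ω, ∑' t : ℕ, (Ac ω)ᵀ ^ t * M * Ac ω ^ t ∂μ) *ᵥ x₀) := by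
  have hAc_meas : AEStronglyMeasurable Ac μ :=
    (stronglyMeasurable_of_measurable_entries hmeas).aestronglyMeasurable
  have h_meas (t : ℕ) : AEStronglyMeasurable (fun ω => (Ac ω)ᵀ ^ t * M * Ac ω ^ t) μ :=
    (by fun_prop : Continuous fun A : Matrix (Fin n) (Fin n) ℝ => Aᵀ ^ t * M * A ^ t)
      |>.comp_aestronglyMeasurable hAc_meas
  have h_bound : ∀ᵐ ω ∂μ, ∀ t, ‖(Ac ω)ᵀ ^ t * M * Ac ω ^ t‖ ≤ ‖M‖ * c ^ 2 * (lam ^ 2) ^ t := by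
    filter_upwards [hAc] with ω hω t
    calc ‖(Ac ω)ᵀ ^ t * M * Ac ω ^ t‖ ≤ ‖M‖ * ‖Ac ω ^ t‖ ^ 2 := by
          rw [← transpose_pow]; exact l2_opNorm_transpose_mul_mul_le _ _
      _ ≤ ‖M‖ * (c * lam ^ t) ^ 2 := by gcongr; exact hω t
      _ = ‖M‖ * c ^ 2 * (lam ^ 2) ^ t := by ring
  have h_geom : Summable fun t : ℕ => ‖M‖ * c ^ 2 * (lam ^ 2) ^ t :=
    (summable_geometric_of_lt_one (sq_nonneg lam) (by nlinarith)).mul_left _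
  have h_int := integrable_tsum_of_norm_le h_meas h_geom h_bound
  refine ⟨h_int, fun x₀ => ?_⟩
  rw [← quadFormAtCLM_apply, ← (quadFormAtCLM x₀).integral_comp_comm h_int]
  refine integral_congr_ae ?_
  filter_upwards [h_bound] with ω hω
  rw [(quadFormAtCLM x₀).map_tsum (h_geom.of_norm_bounded hω)]
  simp only [quadFormAtCLM_apply, transpose_pow, dotProduct_mulVec_transpose_mul_mul]

/-- If, almost surely, `‖A_c(ω)ᵗ‖ ≤ c·λᵗ` (operator norm) for all `t`, with `0 ≤ c`,
`0 ≤ λ < 1`, and `M` is symmetric positive semidefinite, then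
`ω ↦ P(ω) := Σₜ (A_c(ω)ᵀ)ᵗ M A_c(ω)ᵗ` is Bochner integrable and the expected
infinite-horizon cost satisfies
`∫ Σₜ (A_c(ω)ᵗ x₀)ᵀ M (A_c(ω)ᵗ x₀) dμ = x₀ᵀ (∫ P dμ) x₀`; the expected cost-to-go is a
quadratic function of `x₀`. -/
theorem stmt8 {Ω : Type*} [MeasurableSpace Ω] (μ : Measure Ω) [IsProbabilityMeasure μ]
    (n : ℕ) (Ac : Ω → Matrix (Fin n) (Fin n) ℝ)
    (hmeas : ∀ a b : Fin n, Measurable fun ω => Ac ω a b)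
    (c lam : ℝ) (hc : 0 ≤ c) (hlam0 : 0 ≤ lam) (hlam1 : lam < 1)
    (hAc : ∀ᵐ ω ∂μ, ∀ t : ℕ, ‖Ac ω ^ t‖ ≤ c * lam ^ t)
    (M : Matrix (Fin n) (Fin n) ℝ) (hM : M.PosSemidef) :
    Integrable (fun ω => ∑' t : ℕ, (Ac ω)ᵀ ^ t * M * Ac ω ^ t) μ ∧
      ∀ x₀ : Fin n → ℝ,
        ∫ ω, ∑' t : ℕ, (Ac ω ^ t *ᵥ x₀) ⬝ᵥ (M *ᵥ (Ac ω ^ t *ᵥ x₀)) ∂μ =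
          x₀ ⬝ᵥ ((∫ ω, ∑' t : ℕ, (Ac ω)ᵀ ^ t * M * Ac ω ^ t ∂μ) *ᵥ x₀) :=
  stmt8_general μ n Ac hmeas c lam hlam0 hlam1 hAc M
end

section
/- Let A, P, Q ∈ M_n(ℝ) with P and Q symmetric, B an n × m real matrix, and R ∈ M_m(ℝ) symmetric, and suppose S := R + BᵀPB is symmetric positive definite. If AᵀPA − P + Q − AᵀPB S⁻¹ BᵀPA ⪰ 0, then for every m × n real matrix K, (A + BK)ᵀ P (A + BK) − P + Q + KᵀRK ⪰ 0. -/
open Matrix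

lemma aux_sq {m n : ℕ} (S T : Matrix (Fin m) (Fin m) ℝ)
    (K M' : Matrix (Fin m) (Fin n) ℝ)
    (hST : S * T = 1) (hTS : T * S = 1) (hTsym : Tᵀ = T) :
    (K + T * M')ᵀ * S * (K + T * M')
      = Kᵀ * S * K + Kᵀ * M' + M'ᵀ * K + M'ᵀ * (T * M') := by
  have h1 : ∀ X : Matrix (Fin m) (Fin n) ℝ, S * (T * X) = X := fun X => by
    rw [← Matrix.mul_assoc, hST, Matrix.one_mul]
  have h2 : ∀ X : Matrix (Fin m) (Fin n) ℝ, T * (S * X) = X := fun X => by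
    rw [← Matrix.mul_assoc, hTS, Matrix.one_mul]
  simp only [transpose_add, transpose_mul, hTsym, Matrix.add_mul, Matrix.mul_add,
    Matrix.mul_assoc, h1, h2]
  abel

/-- If `S := R + BᵀPB` is symmetric positive definite and the Riccati-type inequality
`AᵀPA − P + Q − AᵀPB S⁻¹ BᵀPA ⪰ 0` holds, then for every gain `K`,
`(A+BK)ᵀP(A+BK) − P + Q + KᵀRK ⪰ 0`. -/
theorem stmt11 (n m : ℕ) (A P Q : Matrix (Fin n) (Fin n) ℝ)
    (B : Matrix (Fin n) (Fin m) ℝ) (R : Matrix (Fin m) (Fin m) ℝ)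
    (hP : Pᵀ = P) (hQ : Qᵀ = Q) (hR : Rᵀ = R)
    (hS : (R + Bᵀ * P * B).PosDef)
    (hRic : (Aᵀ * P * A - P + Q -
      Aᵀ * P * B * (R + Bᵀ * P * B)⁻¹ * (Bᵀ * P * A)).PosSemidef) :
    ∀ K : Matrix (Fin m) (Fin n) ℝ,
      ((A + B * K)ᵀ * P * (A + B * K) - P + Q + Kᵀ * R * K).PosSemidef := by
  intro K
  have hdet : IsUnit (R + Bᵀ * P * B).det := isUnit_iff_ne_zero.mpr hS.det_pos.ne'
  have hST : (R + Bᵀ * P * B) * (R + Bᵀ * P * B)⁻¹ = 1 := Matrix.mul_nonsing_inv _ hdet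
  have hTS : (R + Bᵀ * P * B)⁻¹ * (R + Bᵀ * P * B) = 1 := Matrix.nonsing_inv_mul _ hdet
  have hSsym : (R + Bᵀ * P * B)ᵀ = R + Bᵀ * P * B := by
    simp [transpose_add, transpose_mul, hP, hR, Matrix.mul_assoc]
  have hTsym : ((R + Bᵀ * P * B)⁻¹)ᵀ = (R + Bᵀ * P * B)⁻¹ := by
    rw [Matrix.transpose_nonsing_inv, hSsym]
  have key : (A + B * K)ᵀ * P * (A + B * K) - P + Q + Kᵀ * R * K
      = (Aᵀ * P * A - P + Q -
          Aᵀ * P * B * (R + Bᵀ * P * B)⁻¹ * (Bᵀ * P * A))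
        + (K + (R + Bᵀ * P * B)⁻¹ * (Bᵀ * P * A))ᵀ * (R + Bᵀ * P * B)
            * (K + (R + Bᵀ * P * B)⁻¹ * (Bᵀ * P * A)) := by
    rw [aux_sq _ _ _ _ hST hTS hTsym]
    simp only [Matrix.add_mul, Matrix.mul_add, transpose_add, transpose_mul,
      Matrix.transpose_transpose, hP, Matrix.mul_assoc]
    abel
  rw [key]
  exact hRic.add (hS.posSemidef.conjTranspose_mul_mul_same _)
end

section
/- Let A, P, Q ∈ M_n(ℝ) with P and Q symmetric, B an n × m real matrix, R ∈ M_m(ℝ) symmetric, and suppose S := R + BᵀPB is symmetric positive definite and the Riccati-type inequality AᵀPA − P + Q − AᵀPB S⁻¹ BᵀPA ⪰ 0 holds. Let K be an m × n real matrix such that there exist c ≥ 0 and 0 ≤ λ < 1 with ‖(A + BK)ᵗ‖ ≤ c·λᵗ for all natural numbers t (operator norm). Then for every x₀ ∈ ℝⁿ, with xᵗ := (A + BK)ᵗ x₀, the quadratic cost satisfies x₀ᵀ P x₀ ≤ Σ_{t=0}^{∞} (xᵗ)ᵀ (Q + KᵀRK) xᵗ; that is, x₀ᵀ P x₀ is a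 lower bound on the LQR cost-to-go achieved by any exponentially stabilizing state-feedback gain K. -/
/-!
Completing the square in the gain turns the Riccati inequality into the Lyapunov inequality
`Q + KᵀRK + LᵀPL - P ⪰ 0` for the closed loop `L = A + BK`. Along the trajectory `xᵗ = Lᵗx₀` this
reads `V(xᵗ) ≤ ℓ(xᵗ) + V(xᵗ⁺¹)` for `V(x) = xᵀPx` and the stage cost `ℓ(x) = xᵀ(Q + KᵀRK)x`, so
`V(x₀) ≤ ∑_{t<N} ℓ(xᵗ) + V(xᴺ)`. Exponential stability makes both quadratic forms decay like
`λ²ᵗ`: the cost is summable and `V(xᴺ) → 0`.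
-/

open Matrix
open scoped Matrix.Norms.L2Operator
open Filter Topology

theorem le_tsum_of_le_add_succ {f g : ℕ → ℝ} (hstep : ∀ t, g t ≤ f t + g (t + 1))
    (hf : Summable f) (hg : Tendsto g atTop (𝓝 0)) : g 0 ≤ ∑' t, f t := by
  have hpartial : ∀ N, g 0 ≤ ∑ t ∈ Finset.range N, f t + g N := by
    intro N
    induction N with
    | zero => simp
    | succ N ih => linarith [Finset.sum_range_succ f N, hstep N]
  simpa using le_of_tendsto_of_tendsto' tendsto_const_nhds
    (hf.hasSum.tendsto_sum_nat.add hg) hpartial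

namespace Matrix

section CompletionOfSquares

variable {ι κ 𝕜 : Type*} [Fintype ι] [Fintype κ] [DecidableEq κ] [CommRing 𝕜]

theorem closedLoop_sub_eq_riccati_add_sq {A P Q : Matrix ι ι 𝕜} {B : Matrix ι κ 𝕜}
    {R : Matrix κ κ 𝕜} (K : Matrix κ ι 𝕜) (hP : Pᵀ = P)
    (hS : (R + Bᵀ * P * B)ᵀ = R + Bᵀ * P * B) (hSu : IsUnit (R + Bᵀ * P * B)) :
    Q + Kᵀ * R * K + (A + B * K)ᵀ * P * (A + B * K) - P =
      (Aᵀ * P * A - P + Q - Aᵀ * P * B * (R + Bᵀ * P * B)⁻¹ * (Bᵀ * P * A)) +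
        (K + (R + Bᵀ * P * B)⁻¹ * (Bᵀ * P * A))ᵀ * (R + Bᵀ * P * B) *
          (K + (R + Bᵀ * P * B)⁻¹ * (Bᵀ * P * A)) := by
  generalize hS_def : R + Bᵀ * P * B = S at hS hSu ⊢
  have hSdet : IsUnit S.det := (isUnit_iff_isUnit_det S).mp hSu
  have hsq : (K + S⁻¹ * (Bᵀ * P * A))ᵀ * S * (K + S⁻¹ * (Bᵀ * P * A)) =
      Kᵀ * S * K + Kᵀ * (Bᵀ * P * A) + Aᵀ * P * B * K +
        Aᵀ * P * B * S⁻¹ * (Bᵀ * P * A) := by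
    rw [transpose_add, transpose_mul, transpose_nonsing_inv, hS, Matrix.add_mul, Matrix.add_mul,
      Matrix.mul_add, Matrix.mul_add, Matrix.mul_assoc Kᵀ, Matrix.mul_assoc Kᵀ,
      ← Matrix.mul_assoc S, mul_nonsing_inv S hSdet, Matrix.one_mul, Matrix.mul_assoc _ S⁻¹ S,
      nonsing_inv_mul S hSdet, Matrix.mul_one]
    simp only [transpose_mul, transpose_transpose, hP, Matrix.mul_assoc]
    abel
  rw [hsq, ← hS_def]
  simp only [transpose_add, transpose_mul, Matrix.add_mul, Matrix.mul_add, Matrix.mul_assoc]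
  abel

end CompletionOfSquares

section Lyapunov

variable {ι κ : Type*} [Fintype ι] [Fintype κ] [DecidableEq κ]

theorem posSemidef_closedLoop_lyapunov {A P Q : Matrix ι ι ℝ} {B : Matrix ι κ ℝ}
    {R : Matrix κ κ ℝ} (K : Matrix κ ι ℝ) (hP : Pᵀ = P) (hS : (R + Bᵀ * P * B).PosDef)
    (hRic : (Aᵀ * P * A - P + Q -
      Aᵀ * P * B * (R + Bᵀ * P * B)⁻¹ * (Bᵀ * P * A)).PosSemidef) :
    (Q + Kᵀ * R * K + (A + B * K)ᵀ * P * (A + B * K) - P).PosSemidef := by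
  have hSt : (R + Bᵀ * P * B)ᵀ = R + Bᵀ * P * B := by
    simpa only [conjTranspose_eq_transpose_of_trivial] using hS.isHermitian.eq
  rw [closedLoop_sub_eq_riccati_add_sq K hP hSt hS.isUnit]
  simpa only [conjTranspose_eq_transpose_of_trivial] using
    hRic.add (hS.posSemidef.conjTranspose_mul_mul_same (K + (R + Bᵀ * P * B)⁻¹ * (Bᵀ * P * A)))

theorem dotProduct_mulVec_le_of_posSemidef {M L P : Matrix ι ι ℝ}
    (h : (M + Lᵀ * P * L - P).PosSemidef) (x : ι → ℝ) :
    x ⬝ᵥ (P *ᵥ x) ≤ x ⬝ᵥ (M *ᵥ x) + (L *ᵥ x) ⬝ᵥ (P *ᵥ (L *ᵥ x)) := by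
  have hx := h.dotProduct_mulVec_nonneg x
  rw [star_trivial, sub_mulVec, add_mulVec, ← mulVec_mulVec, ← mulVec_mulVec, dotProduct_sub,
    dotProduct_add, dotProduct_mulVec x Lᵀ, vecMul_transpose] at hx
  linarith

theorem dotProduct_mulVec_le_tsum_of_posSemidef [DecidableEq ι] {M L P : Matrix ι ι ℝ}
    (h : (M + Lᵀ * P * L - P).PosSemidef) (x : ι → ℝ)
    (hM : Summable fun t : ℕ => (L ^ t *ᵥ x) ⬝ᵥ (M *ᵥ (L ^ t *ᵥ x)))
    (hP : Tendsto (fun t : ℕ => (L ^ t *ᵥ x) ⬝ᵥ (P *ᵥ (L ^ t *ᵥ x))) atTop (𝓝 0)) :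
    x ⬝ᵥ (P *ᵥ x) ≤ ∑' t : ℕ, (L ^ t *ᵥ x) ⬝ᵥ (M *ᵥ (L ^ t *ᵥ x)) := by
  have hstep (t : ℕ) : (L ^ t *ᵥ x) ⬝ᵥ (P *ᵥ (L ^ t *ᵥ x)) ≤
      (L ^ t *ᵥ x) ⬝ᵥ (M *ᵥ (L ^ t *ᵥ x)) + (L ^ (t + 1) *ᵥ x) ⬝ᵥ (P *ᵥ (L ^ (t + 1) *ᵥ x)) := by
    rw [pow_succ', ← mulVec_mulVec]
    exact dotProduct_mulVec_le_of_posSemidef h _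
  simpa using le_tsum_of_le_add_succ hstep hM hP

end Lyapunov

section Decay

variable {ι : Type*} [Fintype ι] [DecidableEq ι]

theorem abs_dotProduct_mulVec_le_l2_opNorm (W : Matrix ι ι ℝ) (x : ι → ℝ) :
    |x ⬝ᵥ (W *ᵥ x)| ≤ ‖W‖ * ‖WithLp.toLp 2 x‖ ^ 2 := by
  calc |x ⬝ᵥ (W *ᵥ x)| = |inner ℝ (WithLp.toLp 2 x) (WithLp.toLp 2 (W *ᵥ x))| := by
        rw [EuclideanSpace.inner_toLp_toLp, star_trivial, dotProduct_comm]
    _ ≤ ‖WithLp.toLp 2 x‖ * ‖WithLp.toLp 2 (W *ᵥ x)‖ := abs_real_inner_le_norm _ _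
    _ ≤ ‖WithLp.toLp 2 x‖ * (‖W‖ * ‖WithLp.toLp 2 x‖) :=
        mul_le_mul_of_nonneg_left (W.l2_opNorm_mulVec _) (norm_nonneg _)
    _ = ‖W‖ * ‖WithLp.toLp 2 x‖ ^ 2 := by ring

variable {L : Matrix ι ι ℝ} {c lam : ℝ}

theorem abs_dotProduct_mulVec_pow_mulVec_le (hstab : ∀ t : ℕ, ‖L ^ t‖ ≤ c * lam ^ t)
    (W : Matrix ι ι ℝ) (x : ι → ℝ) (t : ℕ) :
    |(L ^ t *ᵥ x) ⬝ᵥ (W *ᵥ (L ^ t *ᵥ x))| ≤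
      ‖W‖ * (c * ‖WithLp.toLp 2 x‖) ^ 2 * (lam ^ 2) ^ t := by
  have hLx : ‖WithLp.toLp 2 (L ^ t *ᵥ x)‖ ≤ c * lam ^ t * ‖WithLp.toLp 2 x‖ :=
    ((L ^ t).l2_opNorm_mulVec _).trans (mul_le_mul_of_nonneg_right (hstab t) (norm_nonneg _))
  calc _ ≤ ‖W‖ * ‖WithLp.toLp 2 (L ^ t *ᵥ x)‖ ^ 2 := abs_dotProduct_mulVec_le_l2_opNorm W _
    _ ≤ ‖W‖ * (c * lam ^ t * ‖WithLp.toLp 2 x‖) ^ 2 := by gcongr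
    _ = ‖W‖ * (c * ‖WithLp.toLp 2 x‖) ^ 2 * (lam ^ 2) ^ t := by ring

theorem summable_dotProduct_mulVec_pow_mulVec (hlam0 : 0 ≤ lam) (hlam1 : lam < 1)
    (hstab : ∀ t : ℕ, ‖L ^ t‖ ≤ c * lam ^ t) (W : Matrix ι ι ℝ) (x : ι → ℝ) :
    Summable fun t : ℕ => (L ^ t *ᵥ x) ⬝ᵥ (W *ᵥ (L ^ t *ᵥ x)) :=
  .of_norm_bounded ((summable_geometric_of_lt_one (by positivity) (by nlinarith)).mul_left _)
    (abs_dotProduct_mulVec_pow_mulVec_le hstab W x)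

theorem tendsto_dotProduct_mulVec_pow_mulVec (hlam0 : 0 ≤ lam) (hlam1 : lam < 1)
    (hstab : ∀ t : ℕ, ‖L ^ t‖ ≤ c * lam ^ t) (W : Matrix ι ι ℝ) (x : ι → ℝ) :
    Tendsto (fun t : ℕ => (L ^ t *ᵥ x) ⬝ᵥ (W *ᵥ (L ^ t *ᵥ x))) atTop (𝓝 0) := by
  refine squeeze_zero_norm (abs_dotProduct_mulVec_pow_mulVec_le hstab W x) ?_
  simpa using (tendsto_pow_atTop_nhds_zero_of_lt_one (by positivity) (by nlinarith)).const_mul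
    (‖W‖ * (c * ‖WithLp.toLp 2 x‖) ^ 2)

end Decay

end Matrix

theorem stmt12_general (n m : ℕ) (A P Q : Matrix (Fin n) (Fin n) ℝ)
    (B : Matrix (Fin n) (Fin m) ℝ) (R : Matrix (Fin m) (Fin m) ℝ)
    (hP : Pᵀ = P)
    (hS : (R + Bᵀ * P * B).PosDef)
    (hRic : (Aᵀ * P * A - P + Q -
      Aᵀ * P * B * (R + Bᵀ * P * B)⁻¹ * (Bᵀ * P * A)).PosSemidef)
    (K : Matrix (Fin m) (Fin n) ℝ)
    (c lam : ℝ) (hlam0 : 0 ≤ lam) (hlam1 : lam < 1)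
    (hstab : ∀ t : ℕ, ‖(A + B * K) ^ t‖ ≤ c * lam ^ t) :
    ∀ x₀ : Fin n → ℝ,
      x₀ ⬝ᵥ (P *ᵥ x₀) ≤
        ∑' t : ℕ, ((A + B * K) ^ t *ᵥ x₀) ⬝ᵥ
          ((Q + Kᵀ * R * K) *ᵥ ((A + B * K) ^ t *ᵥ x₀)) := fun x₀ =>
  dotProduct_mulVec_le_tsum_of_posSemidef (posSemidef_closedLoop_lyapunov K hP hS hRic) x₀
    (summable_dotProduct_mulVec_pow_mulVec hlam0 hlam1 hstab _ x₀)
    (tendsto_dotProduct_mulVec_pow_mulVec hlam0 hlam1 hstab P x₀)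

/-- If `S := R + BᵀPB` is symmetric positive definite, the Riccati-type inequality
`AᵀPA − P + Q − AᵀPB S⁻¹ BᵀPA ⪰ 0` holds, and `K` exponentially stabilizes the closed loop
(`‖(A+BK)ᵗ‖ ≤ c·λᵗ` in operator norm, `0 ≤ c`, `0 ≤ λ < 1`), then for every `x₀`, with
`xᵗ := (A+BK)ᵗ x₀`, the LQR cost satisfies `x₀ᵀPx₀ ≤ Σₜ (xᵗ)ᵀ(Q + KᵀRK)xᵗ`. -/
theorem stmt12 (n m : ℕ) (A P Q : Matrix (Fin n) (Fin n) ℝ)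
    (B : Matrix (Fin n) (Fin m) ℝ) (R : Matrix (Fin m) (Fin m) ℝ)
    (hP : Pᵀ = P) (hQ : Qᵀ = Q) (hR : Rᵀ = R)
    (hS : (R + Bᵀ * P * B).PosDef)
    (hRic : (Aᵀ * P * A - P + Q -
      Aᵀ * P * B * (R + Bᵀ * P * B)⁻¹ * (Bᵀ * P * A)).PosSemidef)
    (K : Matrix (Fin m) (Fin n) ℝ)
    (c lam : ℝ) (hc : 0 ≤ c) (hlam0 : 0 ≤ lam) (hlam1 : lam < 1)
    (hstab : ∀ t : ℕ, ‖(A + B * K) ^ t‖ ≤ c * lam ^ t) :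
    ∀ x₀ : Fin n → ℝ,
      x₀ ⬝ᵥ (P *ᵥ x₀) ≤
        ∑' t : ℕ, ((A + B * K) ^ t *ᵥ x₀) ⬝ᵥ
          ((Q + Kᵀ * R * K) *ᵥ ((A + B * K) ^ t *ᵥ x₀)) :=
  stmt12_general n m A P Q B R hP hS hRic K c lam hlam0 hlam1 hstab
end

section
/- Let (Ω, μ) be a probability space, let n, N be positive natural numbers, let φ : Ω → ℝ^{N+1} be measurable with square-integrable entries, and let A : Ω → M_n(ℝ) be measurable such that ω ↦ φᵢ(ω)φⱼ(ω)·A(ω) is Bochner integrable for all 0 ≤ i, j ≤ N. Write Φₙ(ω) := φ(ω) ⊗ Iₙ (with φ(ω) viewed as an (N+1) × 1 matrix), let G be the Gram matrix with entries G_{ij} = ∫ φᵢ φⱼ dμ, and let x_pc, y_pc ∈ ℝ^{n(N+1)}. Then the Galerkin conditions ∫ φᵢ(ω)·(Φₙ(ω)ᵀ y_pc − A(ω) Φₙ(ω)ᵀ x_pc) dμ(ω) = 0 for all 0 ≤ i ≤ N hold if and only if (G ⊗ Iₙ) y_pc = (∫ (φ(ω)φ(ω)ᵀ) ⊗ A(ω)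 dμ(ω)) x_pc. -/
/-!
Pointwise, `φᵢ • (Φₙᵀ y - A Φₙᵀ x)` is the `i`-th block of `(φφᵀ ⊗ Iₙ) y - (φφᵀ ⊗ A) x`.
Every entry of `φφᵀ ⊗ Iₙ` and of `φφᵀ ⊗ A` is integrable (Hölder for `φᵢφⱼ`, the hypothesis on
`(φᵢφⱼ) • A` for the rest), so the integral can be taken entrywise, which turns the `i`-th
Galerkin integral into the `i`-th block of `(G ⊗ Iₙ) y - (∫ φφᵀ ⊗ A) x`.
-/

open Matrix MeasureTheory
open scoped Kronecker Matrix.Norms.L2Operator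

/-- `φ ⊗ Iₙ`: the Kronecker product of the vector `φ ∈ ℝ^{N+1}` (viewed as an `(N+1) × 1`
matrix) with the `n × n` identity matrix, giving an `n(N+1) × n` real matrix (the trivial
`Fin 1` column index is dropped). -/
noncomputable def vecKronId (n N : ℕ) (φ : Fin (N + 1) → ℝ) :
    Matrix (Fin (N + 1) × Fin n) (Fin n) ℝ :=
  (Matrix.replicateCol (Fin 1) φ ⊗ₖ (1 : Matrix (Fin n) (Fin n) ℝ)).submatrix id fun j => ((0 : Fin 1), j)

namespace Matrix

variable {Ω m n : Type*} [MeasurableSpace Ω] {μ : Measure Ω} [Fintype n]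

section NormedMatrix

variable [Fintype m] [DecidableEq n]

theorem integrable_iff_forall_integrable_apply {𝕜 : Type*} [RCLike 𝕜] {M : Ω → Matrix m n 𝕜} :
    Integrable M μ ↔ ∀ i j, Integrable (fun ω => M ω i j) μ := by
  rw [← (ofLinearEquiv 𝕜 : (m → n → 𝕜) ≃ₗ[𝕜] Matrix m n 𝕜).toContinuousLinearEquiv.symm
    |>.integrable_comp_iff, integrable_pi_iff]
  simp_rw [integrable_pi_iff]
  rfl

theorem integral_apply_apply {M : Ω → Matrix m n ℝ} (hM : Integrable M μ) (i : m) (j : n) :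
    (∫ ω, M ω ∂μ) i j = ∫ ω, M ω i j ∂μ :=
  ((entryLinearMap ℝ ℝ i j).toContinuousLinearMap.integral_comp_comm hM).symm

end NormedMatrix

theorem integrable_mulVec_apply {M : Ω → Matrix m n ℝ}
    (hM : ∀ i j, Integrable (fun ω => M ω i j) μ) (x : n → ℝ) (i : m) :
    Integrable (fun ω => (M ω *ᵥ x) i) μ :=
  integrable_finsetSum _ fun j _ => (hM i j).mul_const (x j)

theorem mulVec_apply_eq_integral {M : Ω → Matrix m n ℝ} {B : Matrix m n ℝ}
    (hB : ∀ i j, B i j = ∫ ω, M ω i j ∂μ) (hM : ∀ i j, Integrable (fun ω => M ω i j) μ)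
    (x : n → ℝ) (i : m) :
    (B *ᵥ x) i = ∫ ω, (M ω *ᵥ x) i ∂μ := by
  simp only [mulVec, dotProduct, hB, ← integral_mul_const]
  exact (integral_finsetSum _ fun j _ => (hM i j).mul_const (x j)).symm

end Matrix

theorem vecKronId_transpose_mulVec_apply {n N : ℕ} (v : Fin (N + 1) → ℝ)
    (z : Fin (N + 1) × Fin n → ℝ) (b : Fin n) :
    ((vecKronId n N v)ᵀ *ᵥ z) b = ∑ j, v j * z (j, b) := by
  simp [vecKronId, mulVec, dotProduct, Fintype.sum_prod_type, one_apply, mul_comm]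

theorem smul_mulVec_vecKronId_transpose_mulVec {n N : ℕ} (v : Fin (N + 1) → ℝ)
    (A : Matrix (Fin n) (Fin n) ℝ) (z : Fin (N + 1) × Fin n → ℝ) (i : Fin (N + 1)) :
    v i • (A *ᵥ ((vecKronId n N v)ᵀ *ᵥ z)) =
      fun a => ((Matrix.of fun i j => v i * v j) ⊗ₖ A *ᵥ z) (i, a) := by
  ext a
  rw [Pi.smul_apply, smul_eq_mul, mulVec, dotProduct]
  simp_rw [vecKronId_transpose_mulVec_apply]
  simp only [mulVec, dotProduct, Fintype.sum_prod_type, kroneckerMap_apply, of_apply,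
    Finset.mul_sum]
  rw [Finset.sum_comm]
  exact Finset.sum_congr rfl fun j _ => Finset.sum_congr rfl fun b _ => by ring

theorem smul_vecKronId_residual_eq {n N : ℕ} (v : Fin (N + 1) → ℝ) (A : Matrix (Fin n) (Fin n) ℝ)
    (x y : Fin (N + 1) × Fin n → ℝ) (i : Fin (N + 1)) :
    v i • ((vecKronId n N v)ᵀ *ᵥ y - A *ᵥ ((vecKronId n N v)ᵀ *ᵥ x)) =
      fun a => ((Matrix.of fun i j => v i * v j) ⊗ₖ 1 *ᵥ y) (i, a) -
        ((Matrix.of fun i j => v i * v j) ⊗ₖ A *ᵥ x) (i, a) := by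
  rw [smul_sub, ← one_mulVec ((vecKronId n N v)ᵀ *ᵥ y), smul_mulVec_vecKronId_transpose_mulVec,
    smul_mulVec_vecKronId_transpose_mulVec]
  rfl

theorem stmt16_general {Ω : Type*} [MeasurableSpace Ω] (μ : Measure Ω)
    (n N : ℕ)
    (φ : Ω → Fin (N + 1) → ℝ)
    (hφL2 : ∀ i, MemLp (fun ω => φ ω i) 2 μ)
    (A : Ω → Matrix (Fin n) (Fin n) ℝ)
    (hInt : ∀ i j : Fin (N + 1), Integrable (fun ω => (φ ω i * φ ω j) • A ω) μ)
    (xpc ypc : Fin (N + 1) × Fin n → ℝ) :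
    (∀ i : Fin (N + 1),
        ∫ ω, φ ω i • ((vecKronId n N (φ ω))ᵀ *ᵥ ypc -
          A ω *ᵥ ((vecKronId n N (φ ω))ᵀ *ᵥ xpc)) ∂μ = 0) ↔
      ((Matrix.of fun i j => ∫ ω, φ ω i * φ ω j ∂μ) ⊗ₖ
          (1 : Matrix (Fin n) (Fin n) ℝ)) *ᵥ ypc =
        (∫ ω, (Matrix.of fun i j : Fin (N + 1) => φ ω i * φ ω j) ⊗ₖ A ω ∂μ) *ᵥ xpc := by
  set Φ : Ω → Matrix (Fin (N + 1)) (Fin (N + 1)) ℝ := fun ω => of fun i j => φ ω i * φ ω j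
  have hΦ₁ : ∀ p q, Integrable (fun ω => (Φ ω ⊗ₖ (1 : Matrix (Fin n) (Fin n) ℝ)) p q) μ :=
    fun p q => ((hφL2 p.1).integrable_mul (hφL2 q.1)).mul_const _
  have hΦA : ∀ p q, Integrable (fun ω => (Φ ω ⊗ₖ A ω) p q) μ :=
    fun p q => integrable_iff_forall_integrable_apply.mp (hInt p.1 q.1) p.2 q.2
  have hGram : ∀ p, ((Matrix.of fun i j => ∫ ω, φ ω i * φ ω j ∂μ) ⊗ₖ
      (1 : Matrix (Fin n) (Fin n) ℝ) *ᵥ ypc) p = ∫ ω, (Φ ω ⊗ₖ 1 *ᵥ ypc) p ∂μ :=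
    mulVec_apply_eq_integral (fun _ _ => (integral_mul_const _ _).symm) hΦ₁ ypc
  have hMoment : ∀ p, ((∫ ω, Φ ω ⊗ₖ A ω ∂μ) *ᵥ xpc) p = ∫ ω, (Φ ω ⊗ₖ A ω *ᵥ xpc) p ∂μ :=
    mulVec_apply_eq_integral
      (integral_apply_apply (integrable_iff_forall_integrable_apply.mpr hΦA)) hΦA xpc
  have hY := integrable_mulVec_apply hΦ₁ ypc
  have hX := integrable_mulVec_apply hΦA xpc
  simp only [smul_vecKronId_residual_eq, funext_iff, Prod.forall, Pi.zero_apply]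
  refine forall₂_congr fun i a => ?_
  rw [eval_integral, integral_sub (hY _) (hX _), hGram, hMoment, sub_eq_zero]
  exact fun b => (hY (i, b)).sub (hX (i, b))

/-- The Galerkin conditions `E[φᵢ · (Φₙᵀ y_pc − A Φₙᵀ x_pc)] = 0` for `i = 0, …, N` hold iff
`(G ⊗ Iₙ) y_pc = (E[(φφᵀ) ⊗ A]) x_pc`, where `G i j = E[φᵢφⱼ]` is the Gram matrix. This
characterizes the polynomial-chaos (Galerkin) projection defining the surrogate dynamics. -/
theorem stmt16 {Ω : Type*} [MeasurableSpace Ω] (μ : Measure Ω) [IsProbabilityMeasure μ]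
    (n N : ℕ) (hn : 0 < n) (hN : 0 < N)
    (φ : Ω → Fin (N + 1) → ℝ)
    (hφmeas : ∀ i, Measurable fun ω => φ ω i)
    (hφL2 : ∀ i, MemLp (fun ω => φ ω i) 2 μ)
    (A : Ω → Matrix (Fin n) (Fin n) ℝ)
    (hAmeas : ∀ a b : Fin n, Measurable fun ω => A ω a b)
    (hInt : ∀ i j : Fin (N + 1), Integrable (fun ω => (φ ω i * φ ω j) • A ω) μ)
    (xpc ypc : Fin (N + 1) × Fin n → ℝ) :
    (∀ i : Fin (N + 1),
        ∫ ω, φ ω i • ((vecKronId n N (φ ω))ᵀ *ᵥ ypc -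
          A ω *ᵥ ((vecKronId n N (φ ω))ᵀ *ᵥ xpc)) ∂μ = 0) ↔
      ((Matrix.of fun i j => ∫ ω, φ ω i * φ ω j ∂μ) ⊗ₖ
          (1 : Matrix (Fin n) (Fin n) ℝ)) *ᵥ ypc =
        (∫ ω, (Matrix.of fun i j : Fin (N + 1) => φ ω i * φ ω j) ⊗ₖ A ω ∂μ) *ᵥ xpc :=
  stmt16_general μ n N φ hφL2 A hInt xpc ypc
end

section
/- Let (Ω, μ) be a probability space, let n, N be positive natural numbers, let φ : Ω → ℝ^{N+1} be measurable with square-integrable entries, and let Q ∈ M_n(ℝ) be symmetric. Write Φₙ(ω) := φ(ω) ⊗ Iₙ (with φ(ω) viewed as an (N+1) × 1 matrix) and let G be the Gram matrix with entries G_{ij} = ∫ φᵢ φⱼ dμ. Then for every x_pc ∈ ℝ^{n(N+1)}, setting x(ω) := Φₙ(ω)ᵀ x_pc, one has ∫ x(ω)ᵀ Q x(ω) dμ(ω) = x_pcᵀ (G ⊗ Q) x_pc; that is, the expected quadratic cost of the polynomial-chaos approximation equals the quadratic form of the PC coefficient vector with weight matrix Q_pc = E[Φₙ Q Φₙᵀ]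 = G ⊗ Q. -/
/-!
Pointwise, `Φₙ Q Φₙᵀ = φ φᵀ ⊗ Q`, so the integrand is the quadratic form of `x_pc` with the
random weight matrix `φ φᵀ ⊗ Q`. Its entries `φᵢ φⱼ Q_kl` are integrable because the `φᵢ` are
in `L²`, so the integral passes through the finite quadratic form, turning `φ φᵀ` into `G`.
-/

open Matrix MeasureTheory
open scoped Kronecker

theorem transpose_mulVec_dotProduct_mulVec {m n R : Type*} [Fintype m] [Fintype n]
    [CommSemiring R]
    (A : Matrix m n R) (Q : Matrix n n R) (v : m → R) :
    (Aᵀ *ᵥ v) ⬝ᵥ (Q *ᵥ (Aᵀ *ᵥ v)) = v ⬝ᵥ ((A * Q * Aᵀ) *ᵥ v) := by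
  rw [← mulVec_mulVec, ← mulVec_mulVec, dotProduct_mulVec (v := v), mulVec_transpose]

theorem integral_dotProduct_mulVec {Ω ι 𝕜 : Type*} [MeasurableSpace Ω] [Fintype ι] [RCLike 𝕜]
    {μ : Measure Ω} {M : Ω → Matrix ι ι 𝕜} (hM : ∀ i j, Integrable (fun ω => M ω i j) μ)
    (v : ι → 𝕜) :
    ∫ ω, v ⬝ᵥ (M ω *ᵥ v) ∂μ = v ⬝ᵥ ((Matrix.of fun i j => ∫ ω, M ω i j ∂μ) *ᵥ v) := by
  simp only [dotProduct, mulVec, of_apply]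
  rw [integral_finsetSum _ fun i _ =>
    (integrable_finsetSum _ fun j _ => (hM i j).mul_const _).const_mul _]
  simp_rw [integral_const_mul, integral_finsetSum _ fun j _ => (hM _ j).mul_const _,
    integral_mul_const]

theorem vecKronId_mul_mul_transpose (n N : ℕ) (φ : Fin (N + 1) → ℝ)
    (Q : Matrix (Fin n) (Fin n) ℝ) :
    vecKronId n N φ * Q * (vecKronId n N φ)ᵀ = vecMulVec φ φ ⊗ₖ Q := by
  ext ⟨i, k⟩ ⟨j, l⟩
  simp only [vecKronId, mul_apply, transpose_apply, submatrix_apply, kroneckerMap_apply,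
    replicateCol_apply, one_apply, vecMulVec_apply, id]
  simp only [mul_ite, mul_one, mul_zero, ite_mul, zero_mul, Finset.sum_ite_eq, Finset.mem_univ,
    if_true]
  ring

theorem stmt17_general {Ω : Type*} [MeasurableSpace Ω] (μ : Measure Ω)
    (n N : ℕ)
    (φ : Ω → Fin (N + 1) → ℝ)
    (hφL2 : ∀ i, MemLp (fun ω => φ ω i) 2 μ)
    (Q : Matrix (Fin n) (Fin n) ℝ) :
    ∀ xpc : Fin (N + 1) × Fin n → ℝ,
      ∫ ω, ((vecKronId n N (φ ω))ᵀ *ᵥ xpc) ⬝ᵥ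
          (Q *ᵥ ((vecKronId n N (φ ω))ᵀ *ᵥ xpc)) ∂μ =
        xpc ⬝ᵥ (((Matrix.of fun i j => ∫ ω, φ ω i * φ ω j ∂μ) ⊗ₖ Q) *ᵥ xpc) := by
  intro xpc
  have hentries : ∀ p q : Fin (N + 1) × Fin n,
      Integrable (fun ω => (vecMulVec (φ ω) (φ ω) ⊗ₖ Q) p q) μ := fun p q =>
    ((hφL2 p.1).integrable_mul (hφL2 q.1)).mul_const _
  simp_rw [transpose_mulVec_dotProduct_mulVec, vecKronId_mul_mul_transpose]
  rw [integral_dotProduct_mulVec hentries]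
  congr 2
  ext ⟨i, k⟩ ⟨j, l⟩
  simp only [of_apply, kroneckerMap_apply, vecMulVec_apply, integral_mul_const]

/-- For the polynomial-chaos approximation `x(ω) = Φₙ(ω)ᵀ x_pc` with `Φₙ(ω) = φ(ω) ⊗ Iₙ`,
the expected quadratic cost satisfies `E[xᵀQx] = x_pcᵀ (G ⊗ Q) x_pc`, where
`G i j = E[φᵢφⱼ]` is the Gram matrix; i.e. `Q_pc = E[Φₙ Q Φₙᵀ] = G ⊗ Q`. -/
theorem stmt17 {Ω : Type*} [MeasurableSpace Ω] (μ : Measure Ω) [IsProbabilityMeasure μ]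
    (n N : ℕ) (hn : 0 < n) (hN : 0 < N)
    (φ : Ω → Fin (N + 1) → ℝ)
    (hφmeas : ∀ i, Measurable fun ω => φ ω i)
    (hφL2 : ∀ i, MemLp (fun ω => φ ω i) 2 μ)
    (Q : Matrix (Fin n) (Fin n) ℝ) (hQ : Qᵀ = Q) :
    ∀ xpc : Fin (N + 1) × Fin n → ℝ,
      ∫ ω, ((vecKronId n N (φ ω))ᵀ *ᵥ xpc) ⬝ᵥ
          (Q *ᵥ ((vecKronId n N (φ ω))ᵀ *ᵥ xpc)) ∂μ =
        xpc ⬝ᵥ (((Matrix.of fun i j => ∫ ω, φ ω i * φ ω j ∂μ) ⊗ₖ Q) *ᵥ xpc) :=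
  stmt17_general μ n N φ hφL2 Q
end
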